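/- For each index i, the real function f(t) = ℓ evaluated with the diagonal entry a_i of A replaced by t (keeping all other entries of A, V, μ fixed) is twice differentiable at t = a_i and its second derivative equals −(1/2)·(Σ_{ii})², where Σ_{ii} is the (i,i)-entry of Σ = Ω⁻¹. -/

import Mathlib

/-! Replacing `a i` by `t` adds `(t - a i) • Eᵢᵢ` to `Ω`, so by multilinearity of the
determinant in row `i`, `det` becomes `det Ω + (t - a i) · adj(Ω)ᵢᵢ`, and the quadratic form
gains `(t - a i) · rᵢ²`. Hence `ℓ(t)` is a constant plus `½ log` of an affine function plus an
affine function, whose second derivative at `a i` is `-½ (adj(Ω)ᵢᵢ / det Ω)² = -½ Σᵢᵢ²`. -/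

open Matrix

noncomputable def gaussLRLL (D R : ℕ) (y μ : Fin D → ℝ) (a : Fin D → ℝ)
    (V : Matrix (Fin D) (Fin R) ℝ) : ℝ :=
  -((D : ℝ) / 2) * Real.log (2 * Real.pi)
    + (1 / 2) * Real.log (Matrix.diagonal a + V * V.transpose).det
    - (1 / 2) * ((y - μ) ⬝ᵥ (Matrix.diagonal a + V * V.transpose).mulVec (y - μ))

namespace Matrix

variable {n R : Type*} [DecidableEq n]

theorem diagonal_update_eq_add_single [AddCommGroup R] (a : n → R) (i : n) (t : R) :
    diagonal (Function.update a i t) = diagonal a + single i i (t - a i) := by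
  ext j k
  rcases eq_or_ne j k with rfl | hjk
  · rcases eq_or_ne j i with rfl | hji
    · simp
    · simp [hji, hji.symm]
  · simp only [add_apply, diagonal_apply_ne _ hjk, single_apply, zero_add]
    exact (if_neg fun h => hjk (h.1.symm.trans h.2)).symm

variable [Fintype n]

theorem det_add_single_self [CommRing R] (M : Matrix n n R) (i : n) (s : R) :
    (M + single i i s).det = M.det + s * M.adjugate i i := by
  have hrow : M + single i i s = M.updateRow i (M i + s • Pi.single i 1) := by
    ext j k
    by_cases hji : j = i
    · subst hji; simp [single_apply, Pi.single_apply, eq_comm]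
    · simp [updateRow_ne hji, Ne.symm hji]
  rw [hrow, det_updateRow_add, updateRow_eq_self, det_updateRow_smul, adjugate_apply]

theorem dotProduct_add_single_self_mulVec [CommRing R] (M : Matrix n n R) (i : n) (s : R)
    (r : n → R) : r ⬝ᵥ (M + single i i s) *ᵥ r = r ⬝ᵥ M *ᵥ r + s * r i ^ 2 := by
  rw [add_mulVec, dotProduct_add, single_mulVec_eq, dotProduct_smul, dotProduct_single,
    smul_eq_mul]
  ring

theorem inv_apply_eq_adjugate_div_det [Field R] (M : Matrix n n R) (i j : n) :
    M⁻¹ i j = M.adjugate i j / M.det := by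
  rw [inv_def, Ring.inverse_eq_inv', smul_apply, smul_eq_mul, div_eq_inv_mul]

end Matrix

section LogAffine

open Filter Topology

variable {K c b q p t₀ : ℝ}

theorem hasDerivAt_half_log_affine_sub_half_affine {t : ℝ} (ht : c + (t - t₀) * b ≠ 0) :
    HasDerivAt (fun t => K + 1 / 2 * Real.log (c + (t - t₀) * b) - 1 / 2 * (q + (t - t₀) * p))
      (1 / 2 * (b / (c + (t - t₀) * b)) - 1 / 2 * p) t := by
  have hlin : ∀ m e : ℝ, HasDerivAt (fun t => e + (t - t₀) * m) m t := fun m e => by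
    simpa using (((hasDerivAt_id t).sub_const t₀).mul_const m).const_add e
  exact ((((hlin b c).log ht).const_mul (1 / 2)).const_add K).sub ((hlin p q).const_mul (1 / 2))

theorem hasDerivAt_deriv_half_log_affine_sub_half_affine (hc : c ≠ 0) :
    (∀ᶠ t in 𝓝 t₀, DifferentiableAt ℝ
        (fun t => K + 1 / 2 * Real.log (c + (t - t₀) * b) - 1 / 2 * (q + (t - t₀) * p)) t) ∧
      HasDerivAt
        (deriv fun t => K + 1 / 2 * Real.log (c + (t - t₀) * b) - 1 / 2 * (q + (t - t₀) * p))
        (-(1 / 2) * (b / c) ^ 2) t₀ := by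
  have hg : ∀ t, HasDerivAt (fun t => c + (t - t₀) * b) b t := fun t => by
    simpa using (((hasDerivAt_id t).sub_const t₀).mul_const b).const_add c
  have hne : ∀ᶠ t in 𝓝 t₀, c + (t - t₀) * b ≠ 0 :=
    (hg t₀).continuousAt.eventually_ne (by simpa using hc)
  refine ⟨hne.mono fun t ht => (hasDerivAt_half_log_affine_sub_half_affine ht).differentiableAt,
    ?_⟩
  have hderiv := (((hasDerivAt_const t₀ b).div (hg t₀) (by simpa using hc)).const_mul
    (1 / 2)).sub_const (1 / 2 * p)
  refine (hderiv.congr_deriv ?_).congr_of_eventuallyEq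
    (hne.mono fun t ht => (hasDerivAt_half_log_affine_sub_half_affine ht).deriv)
  simp only [sub_self, zero_mul, add_zero]
  field_simp
  ring

end LogAffine

theorem gaussLR_deriv2_a_general (D R : ℕ) (y μ : Fin D → ℝ)
    (a : Fin D → ℝ) (ha : ∀ k, 0 < a k)
    (V : Matrix (Fin D) (Fin R) ℝ) (i : Fin D) :
    (∀ᶠ t in nhds (a i),
        DifferentiableAt ℝ (fun t : ℝ => gaussLRLL D R y μ (Function.update a i t) V) t) ∧
      HasDerivAt (deriv (fun t : ℝ => gaussLRLL D R y μ (Function.update a i t) V))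
        (-(1 / 2) * (((Matrix.diagonal a + V * V.transpose)⁻¹) i i) ^ 2)
        (a i) := by
  set Ω := diagonal a + V * Vᵀ
  have hΩ : Ω.PosDef := (posDef_diagonal_iff.mpr ha).add_posSemidef
    (by simpa using posSemidef_self_mul_conjTranspose V)
  have hprofile : (fun t => gaussLRLL D R y μ (Function.update a i t) V) = fun t =>
      -((D : ℝ) / 2) * Real.log (2 * Real.pi)
        + 1 / 2 * Real.log (Ω.det + (t - a i) * Ω.adjugate i i)
        - 1 / 2 * ((y - μ) ⬝ᵥ Ω *ᵥ (y - μ) + (t - a i) * (y - μ) i ^ 2) := by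
    funext t
    rw [gaussLRLL, diagonal_update_eq_add_single, add_right_comm, det_add_single_self,
      dotProduct_add_single_self_mulVec]
  rw [hprofile, inv_apply_eq_adjugate_div_det]
  exact hasDerivAt_deriv_half_log_affine_sub_half_affine hΩ.det_pos.ne'

/-- Second partial derivative of the low-rank Gaussian log-likelihood with respect to the
diagonal entry `a_i`: the map `t ↦ ℓ(a(t))` is twice differentiable at `t = a i` and its
second derivative equals `-(1/2)·(Σ_{ii})²` where `Σ = Ω⁻¹`. -/
theorem gaussLR_deriv2_a (D R : ℕ) (hD : 1 ≤ D) (y μ : Fin D → ℝ)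
    (a : Fin D → ℝ) (ha : ∀ k, 0 < a k)
    (V : Matrix (Fin D) (Fin R) ℝ) (i : Fin D) :
    (∀ᶠ t in nhds (a i),
        DifferentiableAt ℝ (fun t : ℝ => gaussLRLL D R y μ (Function.update a i t) V) t) ∧
      HasDerivAt (deriv (fun t : ℝ => gaussLRLL D R y μ (Function.update a i t) V))
        (-(1 / 2) * (((Matrix.diagonal a + V * V.transpose)⁻¹) i i) ^ 2)
        (a i) :=
  gaussLR_deriv2_a_general D R y μ a ha V i
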